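/- arXiv:math/0002117 — 3 statements merged into one kernel-verified Lean document; each statement's English description precedes it below -/
import Mathlib

section
/- Let E be a filtered algebra containing a subalgebra B with a given filtration, and suppose E = B ⊕ S where every element of S squares into B. Then there is at most one extension of the filtration of B to an algebra filtration of E such that gr E has no zero divisors. -/
/-- An extension of the filtration `BF` of the even part `B` to an algebra filtration of
`E = B ⊕ S`, indexed by integers `n` representing degree `n/2` (so `B_p` sits in index
`2p`), compatible with the `ℤ₂`-grading, and whose associated graded ring has no zero
divisors. -/
def IsGoodExtension {A : Type*} [Ring A] [Algebra ℂ A]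
    (B S : Submodule ℂ A) (BF : ℕ → Submodule ℂ A) (F : ℤ → Submodule ℂ A) : Prop :=
  (∀ n : ℤ, n < 0 → F n = ⊥) ∧
  Monotone F ∧
  (∀ j k : ℤ, ∀ a ∈ F j, ∀ b ∈ F k, a * b ∈ F (j + k)) ∧
  (∀ a : A, ∃ n : ℤ, a ∈ F n) ∧
  (∀ p : ℕ, F (2 * p) ⊓ B = BF p) ∧
  (∀ n : ℤ, F n = (F n ⊓ B) ⊔ (F n ⊓ S)) ∧
  (∀ j k : ℤ, ∀ a ∈ F j, ∀ b ∈ F k,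
    a * b ∈ F (j + k - 1) → a ∈ F (j - 1) ∨ b ∈ F (k - 1))

/-- For a good extension and a nonzero element `x`, there is a minimal natural degree `d`:
`x ∈ F d`, `x ∉ F (d-1)`, and `d ≤ n` for any `n` with `x ∈ F n`. -/
lemma IsGoodExtension.exists_minDeg {A : Type*} [Ring A] [Algebra ℂ A]
    {B S : Submodule ℂ A} {BF : ℕ → Submodule ℂ A} {F : ℤ → Submodule ℂ A}
    (hF : IsGoodExtension B S BF F) (x : A) (hx0 : x ≠ 0) :
    ∃ d : ℕ, x ∈ F d ∧ x ∉ F ((d : ℤ) - 1) ∧ ∀ n : ℤ, x ∈ F n → (d : ℤ) ≤ n := by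
  obtain ⟨hbot, hmono, hmul, hexh, hB, hsplit, hnzd⟩ := hF
  obtain ⟨m, hm⟩ := hexh x
  have hm0 : 0 ≤ m := by
    by_contra h
    rw [hbot m (by omega)] at hm
    exact hx0 hm
  have hnat : ∃ p : ℕ, x ∈ F p := ⟨m.toNat, by rwa [Int.toNat_of_nonneg hm0]⟩
  classical
  refine ⟨Nat.find hnat, Nat.find_spec hnat, ?_, ?_⟩
  · rcases Nat.eq_zero_or_pos (Nat.find hnat) with h0 | hpos
    · rw [h0]
      norm_num
      rw [hbot (-1) (by omega)]
      simpa using hx0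
    · have := Nat.find_min hnat (m := Nat.find hnat - 1) (by omega)
      have heq : ((Nat.find hnat : ℤ) - 1) = ((Nat.find hnat - 1 : ℕ) : ℤ) := by omega
      rw [heq]
      exact this
  · intro n hn
    have hn0 : 0 ≤ n := by
      by_contra h
      rw [hbot n (by omega)] at hn
      exact hx0 hn
    have : Nat.find hnat ≤ n.toNat :=
      Nat.find_min' hnat (by rwa [Int.toNat_of_nonneg hn0])
    omega

/-- The square of `x` has exact degree `2d` where `d` is the minimal degree of `x`. -/
lemma IsGoodExtension.sq_deg {A : Type*} [Ring A] [Algebra ℂ A]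
    {B S : Submodule ℂ A} {BF : ℕ → Submodule ℂ A} {F : ℤ → Submodule ℂ A}
    (hF : IsGoodExtension B S BF F) (x : A) (d : ℕ) (hd : x ∈ F d)
    (hd' : x ∉ F ((d : ℤ) - 1)) :
    x * x ∈ F (2 * d) ∧ x * x ∉ F (2 * (d : ℤ) - 1) := by
  obtain ⟨hbot, hmono, hmul, hexh, hB, hsplit, hnzd⟩ := hF
  constructor
  · have := hmul d d x hd x hd
    have h2 : ((d : ℤ) + d) = 2 * (d : ℤ) := by ring
    rwa [h2] at this
  · intro hmem
    have h2 : (2 * (d : ℤ) - 1) = (d : ℤ) + d - 1 := by ring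
    rw [h2] at hmem
    rcases hnzd d d x hd x hd hmem with h | h <;> exact hd' h

/-- Core comparison: any element whose square lies in `B` has the same minimal degree in
both filtrations; hence membership transfers. -/
lemma IsGoodExtension.mem_trans {A : Type*} [Ring A] [Algebra ℂ A]
    {B S : Submodule ℂ A} {BF : ℕ → Submodule ℂ A} {F₁ F₂ : ℤ → Submodule ℂ A}
    (h₁ : IsGoodExtension B S BF F₁) (h₂ : IsGoodExtension B S BF F₂)
    (x : A) (hxB : x * x ∈ B) (n : ℤ) (hxn : x ∈ F₁ n) : x ∈ F₂ n := by
  by_cases hx0 : x = 0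
  · rw [hx0]; exact zero_mem _
  obtain ⟨d₁, hd₁, hd₁', hd₁min⟩ := h₁.exists_minDeg x hx0
  obtain ⟨d₂, hd₂, hd₂', hd₂min⟩ := h₂.exists_minDeg x hx0
  have hsq₁ := h₁.sq_deg x d₁ hd₁ hd₁'
  -- x² ∈ F₁ (2 d₁) ⊓ B = BF d₁ = F₂ (2 d₁) ⊓ B
  have hBF : x * x ∈ BF d₁ := by
    rw [← h₁.2.2.2.2.1 d₁]
    exact ⟨by exact_mod_cast hsq₁.1, hxB⟩
  have hxx₂ : x * x ∈ F₂ (2 * (d₁ : ℤ)) := by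
    have : x * x ∈ F₂ (2 * (d₁ : ℕ) : ℤ) ⊓ B := by
      rw [h₂.2.2.2.2.1 d₁]; exact hBF
    exact_mod_cast this.1
  -- d₂ ≤ d₁
  have hle : d₂ ≤ d₁ := by
    by_contra h
    push_neg at h
    have hmem : x * x ∈ F₂ ((d₂ : ℤ) + d₂ - 1) := by
      refine h₂.2.1 ?_ hxx₂
      omega
    rcases h₂.2.2.2.2.2.2 d₂ d₂ x hd₂ x hd₂ hmem with hc | hc <;> exact hd₂' hc
  -- conclude
  have hd₁n : (d₁ : ℤ) ≤ n := hd₁min n hxn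
  exact h₂.2.1 (by omega : (d₂ : ℤ) ≤ n) hd₂

/-- Let `E` be a filtered algebra containing a subalgebra `B` with a given filtration, and
suppose `E = B ⊕ S` where every element of `S` squares into `B`.  Then there is at most one
extension of the filtration of `B` to an algebra filtration of `E` whose associated graded
ring has no zero divisors. -/
theorem stmt_4 (A : Type*) [Ring A] [Algebra ℂ A]
    (B S : Submodule ℂ A)
    (hcompl : IsCompl B S)
    (hone : (1 : A) ∈ B)
    (hBmul : ∀ a ∈ B, ∀ b ∈ B, a * b ∈ B)
    (hSsq : ∀ a ∈ S, ∀ b ∈ S, a * b ∈ B)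
    (BF : ℕ → Submodule ℂ A)
    (hBFle : ∀ p, BF p ≤ B)
    (hBFmono : Monotone BF)
    (hBFmul : ∀ p q : ℕ, ∀ a ∈ BF p, ∀ b ∈ BF q, a * b ∈ BF (p + q))
    (hBFexh : ∀ b ∈ B, ∃ p, b ∈ BF p)
    (F₁ F₂ : ℤ → Submodule ℂ A)
    (h₁ : IsGoodExtension B S BF F₁) (h₂ : IsGoodExtension B S BF F₂) :
    F₁ = F₂ := by
  have key : ∀ (G₁ G₂ : ℤ → Submodule ℂ A), IsGoodExtension B S BF G₁ →
      IsGoodExtension B S BF G₂ → ∀ n : ℤ, G₁ n ≤ G₂ n := by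
    intro G₁ G₂ hG₁ hG₂ n a ha
    have hsplit := hG₁.2.2.2.2.2.1 n
    rw [hsplit] at ha
    rw [Submodule.mem_sup] at ha
    obtain ⟨b, hb, s, hs, rfl⟩ := ha
    have hbB : b ∈ B := hb.2
    have hsS : s ∈ S := hs.2
    have hb₂ : b ∈ G₂ n :=
      hG₁.mem_trans hG₂ b (hBmul b hbB b hbB) n hb.1
    have hs₂ : s ∈ G₂ n :=
      hG₁.mem_trans hG₂ s (hSsq s hsS s hsS) n hs.1
    exact add_mem hb₂ hs₂
  funext n
  exact le_antisymm (key F₁ F₂ h₁ h₂ n) (key F₂ F₁ h₂ h₁ n)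
end

section
/- Let R = ⊕_{j∈(1/2)ℕ} R[j] be a graded vector space with an associative product ∘ and a linear functional T vanishing on R[j] for j > 0, with T(1)=1, such that T is a supertrace for the supergrading (even = integer degrees, odd = half-integer degrees) and such that the pairing Q(φ,ψ) = T(φ∘ψ) is non-degenerate. If additionally R[j]∘R[k] ⊆ ⊕_{p≤j+k} R[p], then R[j]∘R[k] ⊆ ⊕_{|j-k| ≤ p ≤ j+k} R[p]. -/
/-!
If the component of `x ∘ y` in degree `s < |j - k|` were nonzero, non-degeneracy and the
orthogonality of the grading would give `w ∈ R[s]` with `T ((x ∘ y) ∘ w) ≠ 0`. When `k + s < j`,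
associativity rewrites this as `T (x ∘ (y ∘ w))`, which only sees the degree-`j` part of `y ∘ w`,
and that part vanishes since `y ∘ w` has degree at most `k + s`. When `j + s < k`, the supertrace
property first moves `w` to the left and the same argument applies to `T ((w ∘ x) ∘ y)`.
-/

open DirectSum

section Decomposition

variable {ι K M : Type*} [DecidableEq ι] [Semiring K] [AddCommMonoid M] [Module K M]
  (𝒜 : ι → Submodule K M) [Decomposition 𝒜]

theorem DirectSum.mem_iSup_iff_forall_decompose_eq_zero {P : ι → Prop} {z : M} :
    z ∈ ⨆ (i) (_ : P i), 𝒜 i ↔ ∀ i, ¬P i → (decompose 𝒜 z i : M) = 0 := by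
  classical
  constructor
  · intro hz s hs
    refine Submodule.iSup_induction _ (motive := fun z => (decompose 𝒜 z s : M) = 0) hz
      (fun i z hz => ?_) (by simp) (fun x y hx hy => by simp [decompose_add, hx, hy])
    by_cases hi : P i
    · rw [iSup_pos hi] at hz
      exact decompose_of_mem_ne 𝒜 hz (ne_of_apply_ne P (by simp [hi, hs]))
    · rw [iSup_neg hi, Submodule.mem_bot] at hz
      simp [hz]
  · intro h
    rw [← sum_support_decompose 𝒜 z]
    refine Submodule.sum_mem _ fun i _ => ?_
    by_cases hi : P i
    · exact Submodule.mem_iSup_of_mem i (Submodule.mem_iSup_of_mem hi (decompose 𝒜 z i).2)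
    · rw [h i hi]
      exact Submodule.zero_mem _

end Decomposition

section OrthogonalForm

variable {ι K M : Type*} [DecidableEq ι] [CommSemiring K] [AddCommMonoid M] [Module K M]
  {𝒜 : ι → Submodule K M} [Decomposition 𝒜] {B : M →ₗ[K] M →ₗ[K] K}

theorem LinearMap.apply_decompose_left
    (horth : ∀ i j, i ≠ j → ∀ x ∈ 𝒜 i, ∀ y ∈ 𝒜 j, B x y = 0)
    {s : ι} {w : M} (hw : w ∈ 𝒜 s) (z : M) : B z w = B (decompose 𝒜 z s) w := by
  classical
  conv_lhs => rw [← sum_support_decompose 𝒜 z]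
  rw [map_sum, LinearMap.sum_apply]
  refine Finset.sum_eq_single s (fun i _ hi => horth i s hi _ (decompose 𝒜 z i).2 w hw) ?_
  intro hs
  rw [DFinsupp.notMem_support_iff.mp hs]
  simp

theorem LinearMap.apply_decompose_right
    (horth : ∀ i j, i ≠ j → ∀ x ∈ 𝒜 i, ∀ y ∈ 𝒜 j, B x y = 0)
    {s : ι} {w : M} (hw : w ∈ 𝒜 s) (z : M) : B w z = B w (decompose 𝒜 z s) :=
  LinearMap.apply_decompose_left (B := B.flip)
    (fun i j hij x hx y hy => horth j i hij.symm y hy x hx) hw z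

end OrthogonalForm

section GradedTrace

variable {K R : Type*} [CommRing K] [AddCommGroup R] [Module K R]
  {Rdeg : ℕ → Submodule K R} [Decomposition Rdeg] {c : R →ₗ[K] R →ₗ[K] R} {T : R →ₗ[K] K}
  {j k s : ℕ} {x y w : R}

theorem trace_mul_eq_zero_of_lt_right (hassoc : ∀ a b d : R, c (c a b) d = c a (c b d))
    (horth : ∀ j k : ℕ, j ≠ k → ∀ x ∈ Rdeg j, ∀ y ∈ Rdeg k, T (c x y) = 0)
    (hupper : ∀ j k : ℕ, ∀ x ∈ Rdeg j, ∀ y ∈ Rdeg k, c x y ∈ ⨆ (p : ℕ) (_ : p ≤ j + k), Rdeg p)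
    (hx : x ∈ Rdeg j) (hy : y ∈ Rdeg k) (hw : w ∈ Rdeg s) (h : k + s < j) :
    T (c (c x y) w) = 0 := by
  have hyw : (decompose Rdeg (c y w) j : R) = 0 :=
    (mem_iSup_iff_forall_decompose_eq_zero Rdeg).mp (hupper k s y hy w hw) j (by omega)
  calc T (c (c x y) w) = T (c x (c y w)) := by rw [hassoc]
    _ = T (c x (decompose Rdeg (c y w) j)) :=
      LinearMap.apply_decompose_right (B := c.compr₂ T) horth hx _
    _ = 0 := by rw [hyw, map_zero, map_zero]

theorem trace_mul_eq_zero_of_lt_left (hassoc : ∀ a b d : R, c (c a b) d = c a (c b d))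
    (horth : ∀ j k : ℕ, j ≠ k → ∀ x ∈ Rdeg j, ∀ y ∈ Rdeg k, T (c x y) = 0)
    (hupper : ∀ j k : ℕ, ∀ x ∈ Rdeg j, ∀ y ∈ Rdeg k, c x y ∈ ⨆ (p : ℕ) (_ : p ≤ j + k), Rdeg p)
    (hx : x ∈ Rdeg j) (hy : y ∈ Rdeg k) (hw : w ∈ Rdeg s) (h : s + j < k) :
    T (c w (c x y)) = 0 := by
  have hwx : (decompose Rdeg (c w x) k : R) = 0 :=
    (mem_iSup_iff_forall_decompose_eq_zero Rdeg).mp (hupper s j w hw x hx) k (by omega)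
  calc T (c w (c x y)) = T (c (c w x) y) := by rw [hassoc]
    _ = T (c (decompose Rdeg (c w x) k) y) :=
      LinearMap.apply_decompose_left (B := c.compr₂ T) horth hy _
    _ = 0 := by rw [hwx, map_zero, LinearMap.zero_apply, map_zero]

theorem decompose_mul_eq_zero_of_lt_dist (hassoc : ∀ a b d : R, c (c a b) d = c a (c b d))
    (hsuper : ∀ j k : ℕ, ∀ x ∈ Rdeg j, ∀ y ∈ Rdeg k, T (c x y) = (-1 : K) ^ (j * k) * T (c y x))
    (horth : ∀ j k : ℕ, j ≠ k → ∀ x ∈ Rdeg j, ∀ y ∈ Rdeg k, T (c x y) = 0)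
    (hnondeg : ∀ a : R, (∀ b : R, T (c a b) = 0) → a = 0)
    (hupper : ∀ j k : ℕ, ∀ x ∈ Rdeg j, ∀ y ∈ Rdeg k, c x y ∈ ⨆ (p : ℕ) (_ : p ≤ j + k), Rdeg p)
    (hx : x ∈ Rdeg j) (hy : y ∈ Rdeg k) (hs : s < Nat.dist j k) :
    (decompose Rdeg (c x y) s : R) = 0 := by
  set z := (decompose Rdeg (c x y) s : R)
  have hz : z ∈ Rdeg s := (decompose Rdeg (c x y) s).2
  refine hnondeg z fun b => ?_
  set w := (decompose Rdeg b s : R)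
  have hw : w ∈ Rdeg s := (decompose Rdeg b s).2
  have hzb : T (c z b) = T (c z w) :=
    LinearMap.apply_decompose_right (B := c.compr₂ T) horth hz b
  have hgap : s + j < k ∨ k + s < j := by unfold Nat.dist at hs; omega
  rcases hgap with hleft | hright
  · have hwz : T (c w (c x y)) = T (c w z) :=
      LinearMap.apply_decompose_right (B := c.compr₂ T) horth hw (c x y)
    calc T (c z b) = (-1 : K) ^ (s * s) * T (c w z) := by rw [hzb, hsuper s s z hz w hw]
      _ = 0 := by
        rw [← hwz, trace_mul_eq_zero_of_lt_left hassoc horth hupper hx hy hw hleft,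
          mul_zero]
  · have hzw : T (c (c x y) w) = T (c z w) :=
      LinearMap.apply_decompose_left (B := c.compr₂ T) horth hw (c x y)
    rw [hzb, ← hzw]
    exact trace_mul_eq_zero_of_lt_right hassoc horth hupper hx hy hw hright

end GradedTrace

theorem stmt_13_general (R : Type*) [AddCommGroup R] [Module ℂ R]
    (Rdeg : ℕ → Submodule ℂ R)
    (hinternal : DirectSum.IsInternal Rdeg)
    (c : R →ₗ[ℂ] R →ₗ[ℂ] R)
    (hassoc : ∀ a b d : R, c (c a b) d = c a (c b d))
    (T : R →ₗ[ℂ] ℂ)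
    (hsuper : ∀ j k : ℕ, ∀ x ∈ Rdeg j, ∀ y ∈ Rdeg k,
      T (c x y) = (-1 : ℂ) ^ (j * k) * T (c y x))
    (horth : ∀ j k : ℕ, j ≠ k → ∀ x ∈ Rdeg j, ∀ y ∈ Rdeg k, T (c x y) = 0)
    (hnondeg : ∀ a : R, (∀ b : R, T (c a b) = 0) → a = 0)
    (hupper : ∀ j k : ℕ, ∀ x ∈ Rdeg j, ∀ y ∈ Rdeg k,
      c x y ∈ ⨆ (p : ℕ) (_ : p ≤ j + k), Rdeg p) :
    ∀ j k : ℕ, ∀ x ∈ Rdeg j, ∀ y ∈ Rdeg k,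
      c x y ∈ ⨆ (p : ℕ) (_ : Nat.dist j k ≤ p ∧ p ≤ j + k), Rdeg p := by
  let := hinternal.chooseDecomposition
  intro j k x hx y hy
  refine (mem_iSup_iff_forall_decompose_eq_zero Rdeg).mpr fun s hs => ?_
  rcases Nat.lt_or_ge s (Nat.dist j k) with hlow | hge
  · exact decompose_mul_eq_zero_of_lt_dist hassoc hsuper horth hnondeg hupper hx hy hlow
  · exact (mem_iSup_iff_forall_decompose_eq_zero Rdeg).mp (hupper j k x hx y hy) s (by omega)

/-- Let `R = ⊕_{j∈(1/2)ℕ} R[j]` (grading encoded by `n : ℕ`, `n` twice the degree) with an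
associative unital product `∘` and a linear functional `T` vanishing on `R[j]` for `j > 0`,
`T(1) = 1`, such that `T` is a supertrace for the supergrading (even = integer degrees,
odd = half-integer degrees) and the pairing `Q(φ,ψ) = T(φ∘ψ)` is non-degenerate and
orthogonal for the grading.  If `R[j]∘R[k] ⊆ ⊕_{p ≤ j+k} R[p]` then in fact
`R[j]∘R[k] ⊆ ⊕_{|j-k| ≤ p ≤ j+k} R[p]`. -/
theorem stmt_13 (R : Type*) [AddCommGroup R] [Module ℂ R]
    (Rdeg : ℕ → Submodule ℂ R)
    (hinternal : DirectSum.IsInternal Rdeg)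
    (c : R →ₗ[ℂ] R →ₗ[ℂ] R) (one : R)
    (hassoc : ∀ a b d : R, c (c a b) d = c a (c b d))
    (hone_deg : one ∈ Rdeg 0)
    (honeL : ∀ a : R, c one a = a) (honeR : ∀ a : R, c a one = a)
    (T : R →ₗ[ℂ] ℂ)
    (hT1 : T one = 1)
    (hT0 : ∀ n : ℕ, 0 < n → ∀ x ∈ Rdeg n, T x = 0)
    (hsuper : ∀ j k : ℕ, ∀ x ∈ Rdeg j, ∀ y ∈ Rdeg k,
      T (c x y) = (-1 : ℂ) ^ (j * k) * T (c y x))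
    (horth : ∀ j k : ℕ, j ≠ k → ∀ x ∈ Rdeg j, ∀ y ∈ Rdeg k, T (c x y) = 0)
    (hnondeg : ∀ a : R, (∀ b : R, T (c a b) = 0) → a = 0)
    (hupper : ∀ j k : ℕ, ∀ x ∈ Rdeg j, ∀ y ∈ Rdeg k,
      c x y ∈ ⨆ (p : ℕ) (_ : p ≤ j + k), Rdeg p) :
    ∀ j k : ℕ, ∀ x ∈ Rdeg j, ∀ y ∈ Rdeg k,
      c x y ∈ ⨆ (p : ℕ) (_ : Nat.dist j k ≤ p ∧ p ≤ j + k), Rdeg p :=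
  stmt_13_general R Rdeg hinternal c hassoc T hsuper horth hnondeg hupper
end

section
/- Let A be an algebra with product ∘ admitting a grading-compatible decomposition φ∘ψ = Σ_p C_p(φ,ψ) with C_p(φ,ψ) of degree j+k-p for φ,ψ of degrees j,k, and suppose there is an anti-automorphism α of (A,∘) with α(φ) = i^{2j}φ on degree-j elements. Then the parity relation C_p(φ,ψ) = (-1)^p C_p(ψ,φ) holds; in particular C₁(φ,ψ) = (1/2)(φ∘ψ - ψ∘φ)'s degree-(j+k-1) part, and if C₀ is commutative and C₁(φ,ψ) - C₁(ψ,φ) = {φ,ψ}, then C₁(φ,ψ) = (1/2){φ,ψ}. -/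
/-!
Applying `α` to `φ ∘ ψ` multiplies the term `C_q(φ,ψ)` by `i^(n - 2q)` (with `n = j + k`, in
doubled degrees), while `α ψ ∘ α φ` is `i^n (ψ ∘ φ)`. The terms `C_q` with `2q ≤ n` lie in
pairwise distinct degrees `n - 2q`, so comparing the two sides degree by degree gives
`i^(n-2p) C_p(φ,ψ) = i^n C_p(ψ,φ)`, and `i^n = (-1)^p i^(n-2p)`.
-/

open Finset

theorem DirectSum.eq_of_sum_eq_sum_of_mem {ι κ M σ : Type*} [DecidableEq ι] [AddCommMonoid M]
    [SetLike σ M] [AddSubmonoidClass σ M] (𝓜 : ι → σ) [DirectSum.Decomposition 𝓜]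
    {s : Finset κ} {d : κ → ι} (hd : Set.InjOn d s) {x y : κ → M}
    (hx : ∀ q ∈ s, x q ∈ 𝓜 (d q)) (hy : ∀ q ∈ s, y q ∈ 𝓜 (d q))
    (hxy : ∑ q ∈ s, x q = ∑ q ∈ s, y q) {p : κ} (hp : p ∈ s) : x p = y p := by
  have component : ∀ z : κ → M, (∀ q ∈ s, z q ∈ 𝓜 (d q)) →
      (DirectSum.decompose 𝓜 (∑ q ∈ s, z q) (d p) : M) = z p := by
    intro z hz
    rw [DirectSum.decompose_sum, DirectSum.sum_apply, AddSubmonoidClass.coe_finsetSum,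
      Finset.sum_eq_single p _ (fun hp' => absurd hp hp'),
      DirectSum.decompose_of_mem_same _ (hz p hp)]
    intro q hq hqp
    exact DirectSum.decompose_of_mem_ne _ (hz q hq) fun h => hqp (hd hq hp h)
  rw [← component x hx, hxy, component y hy]

theorem Finset.sum_range_succ_eq_sum_range_half_succ {M : Type*} [AddCommMonoid M] {f : ℕ → M}
    {n : ℕ} (hf : ∀ q, n < 2 * q → f q = 0) :
    ∑ q ∈ range (n + 1), f q = ∑ q ∈ range (n / 2 + 1), f q :=
  (sum_subset (range_subset_range.mpr (by omega))
    fun q _ hq => hf q (by simp only [mem_range] at hq; omega)).symm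

theorem Complex.I_pow_eq_neg_one_pow_mul {n p : ℕ} (h : 2 * p ≤ n) :
    Complex.I ^ n = (-1) ^ p * Complex.I ^ (n - 2 * p) := by
  rw [← Complex.I_sq, ← pow_mul, ← pow_add]
  congr 1
  omega

section AntiInvolution

variable {A : Type*} [AddCommGroup A] [Module ℂ A] {Adeg : ℕ → Submodule ℂ A}
  {c : A →ₗ[ℂ] A →ₗ[ℂ] A} {C : ℕ → A → A → A} {α : A →ₗ[ℂ] A}

theorem coeff_eq_neg_one_pow_smul_coeff_swap [DirectSum.Decomposition Adeg]
    (hCdeg : ∀ p j k : ℕ, ∀ φ ∈ Adeg j, ∀ ψ ∈ Adeg k, C p φ ψ ∈ Adeg (j + k - 2 * p))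
    (hCzero : ∀ p j k : ℕ, j + k < 2 * p → ∀ φ ∈ Adeg j, ∀ ψ ∈ Adeg k, C p φ ψ = 0)
    (hCsum : ∀ j k : ℕ, ∀ φ ∈ Adeg j, ∀ ψ ∈ Adeg k,
      c φ ψ = ∑ p ∈ Finset.range (j + k + 1), C p φ ψ)
    (hα_anti : ∀ a b : A, α (c a b) = c (α b) (α a))
    (hα_deg : ∀ n : ℕ, ∀ a ∈ Adeg n, α a = (Complex.I ^ n) • a)
    {p j k : ℕ} {φ ψ : A} (hφ : φ ∈ Adeg j) (hψ : ψ ∈ Adeg k) :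
    C p φ ψ = ((-1 : ℂ) ^ p) • C p ψ φ := by
  obtain hp | hp := lt_or_ge (j + k) (2 * p)
  · rw [hCzero p j k hp φ hφ ψ hψ, hCzero p k j (by omega) ψ hψ φ hφ, smul_zero]
  have hCswap : ∀ q, C q ψ φ ∈ Adeg (j + k - 2 * q) := fun q => by
    simpa only [add_comm k j] using hCdeg q k j ψ hψ φ hφ
  have hsum : ∀ {j k φ ψ}, φ ∈ Adeg j → ψ ∈ Adeg k →
      c φ ψ = ∑ q ∈ range ((j + k) / 2 + 1), C q φ ψ := fun hφ hψ => by
    rw [hCsum _ _ _ hφ _ hψ,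
      sum_range_succ_eq_sum_range_half_succ fun q hq => hCzero q _ _ hq _ hφ _ hψ]
  have hleft : α (c φ ψ) =
      ∑ q ∈ range ((j + k) / 2 + 1), Complex.I ^ (j + k - 2 * q) • C q φ ψ := by
    rw [hsum hφ hψ, map_sum]
    exact sum_congr rfl fun q _ => hα_deg _ _ (hCdeg q j k φ hφ ψ hψ)
  have hright : c (α ψ) (α φ) =
      ∑ q ∈ range ((j + k) / 2 + 1), Complex.I ^ (j + k) • C q ψ φ := by
    rw [hα_deg k ψ hψ, hα_deg j φ hφ]
    simp only [map_smul, LinearMap.smul_apply, smul_smul, ← pow_add]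
    rw [hsum hψ hφ, add_comm k j, smul_sum]
  have hdeg : Set.InjOn (fun q => j + k - 2 * q) (range ((j + k) / 2 + 1) : Set ℕ) :=
    fun q hq r hr h => by simp only [coe_range, Set.mem_Iio] at hq hr h; omega
  have hcomp := DirectSum.eq_of_sum_eq_sum_of_mem Adeg hdeg
    (fun q _ => (Adeg _).smul_mem _ (hCdeg q j k φ hφ ψ hψ))
    (fun q _ => (Adeg _).smul_mem _ (hCswap q))
    (hleft.symm.trans ((hα_anti φ ψ).trans hright))
    (mem_range.mpr (by omega : p < (j + k) / 2 + 1))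
  rw [Complex.I_pow_eq_neg_one_pow_mul hp, mul_smul, smul_comm ((-1 : ℂ) ^ p)] at hcomp
  exact smul_right_injective A (pow_ne_zero _ Complex.I_ne_zero) hcomp

end AntiInvolution

theorem stmt_14_general (A : Type*) [AddCommGroup A] [Module ℂ A]
    (Adeg : ℕ → Submodule ℂ A)
    (hinternal : DirectSum.IsInternal Adeg)
    (c : A →ₗ[ℂ] A →ₗ[ℂ] A)
    (C : ℕ → A → A → A)
    (hCdeg : ∀ p j k : ℕ, ∀ φ ∈ Adeg j, ∀ ψ ∈ Adeg k, C p φ ψ ∈ Adeg (j + k - 2 * p))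
    (hCzero : ∀ p j k : ℕ, j + k < 2 * p → ∀ φ ∈ Adeg j, ∀ ψ ∈ Adeg k, C p φ ψ = 0)
    (hCsum : ∀ j k : ℕ, ∀ φ ∈ Adeg j, ∀ ψ ∈ Adeg k,
      c φ ψ = ∑ p ∈ Finset.range (j + k + 1), C p φ ψ)
    (α : A →ₗ[ℂ] A)
    (hα_anti : ∀ a b : A, α (c a b) = c (α b) (α a))
    (hα_deg : ∀ n : ℕ, ∀ a ∈ Adeg n, α a = (Complex.I ^ n) • a)
    (br : A → A → A)
    (hbr : ∀ j k : ℕ, ∀ φ ∈ Adeg j, ∀ ψ ∈ Adeg k, C 1 φ ψ - C 1 ψ φ = br φ ψ) :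
    (∀ p j k : ℕ, ∀ φ ∈ Adeg j, ∀ ψ ∈ Adeg k,
      C p φ ψ = ((-1 : ℂ) ^ p) • C p ψ φ) ∧
    (∀ j k : ℕ, ∀ φ ∈ Adeg j, ∀ ψ ∈ Adeg k,
      C 1 φ ψ = (1/2 : ℂ) • br φ ψ) := by
  have := hinternal.chooseDecomposition
  have parity : ∀ p j k : ℕ, ∀ φ ∈ Adeg j, ∀ ψ ∈ Adeg k, C p φ ψ = ((-1 : ℂ) ^ p) • C p ψ φ :=
    fun _ _ _ _ hφ _ hψ =>
      coeff_eq_neg_one_pow_smul_coeff_swap hCdeg hCzero hCsum hα_anti hα_deg hφ hψ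
  refine ⟨parity, fun j k φ hφ ψ hψ => ?_⟩
  have hanti : C 1 ψ φ = -C 1 φ ψ := by
    rw [parity 1 k j ψ hψ φ hφ, pow_one, neg_one_smul]
  rw [← hbr j k φ hφ ψ hψ, hanti]
  module

/-- Let `A = ⊕_{j∈(1/2)ℕ} A[j]` (grading encoded by `n : ℕ`, `n` twice the degree) be a
graded vector space with an associative product `∘` admitting a grading-compatible
decomposition `φ∘ψ = Σ_p C_p(φ,ψ)` with `C_p(φ,ψ)` of degree `j+k-p` for `φ, ψ` of degrees
`j, k`, and suppose there is an anti-automorphism `α` of `(A,∘)` with `α(φ) = i^{2j} φ` on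
degree-`j` elements.  Then the parity relation `C_p(φ,ψ) = (-1)^p C_p(ψ,φ)` holds; and if
`C₀` is commutative and `C₁(φ,ψ) - C₁(ψ,φ) = {φ,ψ}` then `C₁(φ,ψ) = (1/2){φ,ψ}`. -/
theorem stmt_14 (A : Type*) [AddCommGroup A] [Module ℂ A]
    (Adeg : ℕ → Submodule ℂ A)
    (hinternal : DirectSum.IsInternal Adeg)
    (c : A →ₗ[ℂ] A →ₗ[ℂ] A)
    (hassoc : ∀ a b d : A, c (c a b) d = c a (c b d))
    (C : ℕ → A → A → A)
    (hCdeg : ∀ p j k : ℕ, ∀ φ ∈ Adeg j, ∀ ψ ∈ Adeg k, C p φ ψ ∈ Adeg (j + k - 2 * p))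
    (hCzero : ∀ p j k : ℕ, j + k < 2 * p → ∀ φ ∈ Adeg j, ∀ ψ ∈ Adeg k, C p φ ψ = 0)
    (hCsum : ∀ j k : ℕ, ∀ φ ∈ Adeg j, ∀ ψ ∈ Adeg k,
      c φ ψ = ∑ p ∈ Finset.range (j + k + 1), C p φ ψ)
    (hC0comm : ∀ φ ψ : A, C 0 φ ψ = C 0 ψ φ)
    (α : A →ₗ[ℂ] A)
    (hα_anti : ∀ a b : A, α (c a b) = c (α b) (α a))
    (hα_deg : ∀ n : ℕ, ∀ a ∈ Adeg n, α a = (Complex.I ^ n) • a)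
    (br : A → A → A)
    (hbr : ∀ j k : ℕ, ∀ φ ∈ Adeg j, ∀ ψ ∈ Adeg k, C 1 φ ψ - C 1 ψ φ = br φ ψ) :
    (∀ p j k : ℕ, ∀ φ ∈ Adeg j, ∀ ψ ∈ Adeg k,
      C p φ ψ = ((-1 : ℂ) ^ p) • C p ψ φ) ∧
    (∀ j k : ℕ, ∀ φ ∈ Adeg j, ∀ ψ ∈ Adeg k,
      C 1 φ ψ = (1/2 : ℂ) • br φ ψ) :=
  stmt_14_general A Adeg hinternal c C hCdeg hCzero hCsum α hα_anti hα_deg br hbr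
end
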